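/- Let A be an abelian category, r, d : Obj(A) → ℝ additive functions with r > 0 on nonzero objects, and μ = d/r. Suppose the nonzero object F has a maximal destabilizing subobject B (i.e. μ(E) ≤ μ(B) for all nonzero subobjects E ⊆ F, with equality implying E ⊆ B) and B ≠ F. Then for the quotient G = F/B, every nonzero subobject E' ⊆ G satisfies μ(E') < μ(B). -/

import Mathlib

open CategoryTheory CategoryTheory.Limits

private lemma mono_of_isZero_src' {A : Type*} [Category A] [Abelian A] {Z X : A}
    (hZ : IsZero Z) (f : Z ⟶ X) : Mono f :=
  ⟨fun g h _ => hZ.eq_of_tgt g h⟩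

private lemma isZero_cokernel_of_epi' {A : Type*} [Category A] [Abelian A] {X Y : A}
    (f : X ⟶ Y) [Epi f] : IsZero (cokernel f) :=
  (isZero_zero A).of_iso (cokernel.ofEpi f)

private lemma r_nonpos_of_isZero {A : Type*} [Category A] [Abelian A] (r : A → ℝ)
    (hr : ∀ {X Y : A} (f : X ⟶ Y), Mono f → r Y = r X + r (cokernel f))
    (hrpos : ∀ X : A, ¬ IsZero X → 0 < r X)
    {X₀ : A} (hX₀ : ¬ IsZero X₀) {Z : A} (hZ : IsZero Z) : r Z ≤ 0 := by
  by_contra h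
  push_neg at h
  have key : ∀ n : ℕ, ∃ Y : A, ¬ IsZero Y ∧ r Y = r X₀ - n * r Z := by
    intro n
    induction n with
    | zero => exact ⟨X₀, hX₀, by simp⟩
    | succ n ih =>
        obtain ⟨Y, hY, hrY⟩ := ih
        have hm : Mono (0 : Z ⟶ Y) := mono_of_isZero_src' hZ _
        have heq := hr (0 : Z ⟶ Y) hm
        refine ⟨cokernel (0 : Z ⟶ Y),
          fun hzero => hY (hzero.of_iso cokernelZeroIsoTarget.symm), ?_⟩
        push_cast
        linarith
  obtain ⟨n, hn⟩ := exists_nat_gt (r X₀ / r Z)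
  obtain ⟨Y, hY, hrY⟩ := key n
  have hpos := hrpos Y hY
  have : (n : ℝ) < r X₀ / r Z := by
    rw [lt_div_iff₀ h]
    linarith
  linarith

private lemma r_eq_of_iso' {A : Type*} [Category A] [Abelian A] (r : A → ℝ)
    (hr : ∀ {X Y : A} (f : X ⟶ Y), Mono f → r Y = r X + r (cokernel f))
    (hrpos : ∀ X : A, ¬ IsZero X → 0 < r X)
    {X₀ : A} (hX₀ : ¬ IsZero X₀) {P Q : A} (e : P ≅ Q) : r P = r Q := by
  have h1 := hr e.hom inferInstance
  have h2 := hr e.inv inferInstance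
  have z1 := r_nonpos_of_isZero r hr hrpos hX₀ (isZero_cokernel_of_epi' e.hom)
  have z2 := r_nonpos_of_isZero r hr hrpos hX₀ (isZero_cokernel_of_epi' e.inv)
  linarith

set_option maxHeartbeats 1600000 in
/-- If `B ⊆ F` is a maximal destabilizing subobject of `F` (every nonzero subobject
`E ⊆ F` satisfies `μ(E) ≤ μ(B)`, with equality forcing `E ⊆ B`) and `B ≠ F`, then
every nonzero subobject `E'` of the quotient `G = F/B` satisfies `μ(E') < μ(B)`.
Slopes `μ = d / r` are compared cross-multiplied, `r, d` being additive and `r > 0`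
on nonzero objects. -/
theorem stmt7 {A : Type*} [Category A] [Abelian A] (r d : A → ℝ)
    (hr : ∀ {X Y : A} (f : X ⟶ Y), Mono f → r Y = r X + r (cokernel f))
    (hd : ∀ {X Y : A} (f : X ⟶ Y), Mono f → d Y = d X + d (cokernel f))
    (hrpos : ∀ X : A, ¬ IsZero X → 0 < r X)
    (F B : A) (i : B ⟶ F) (hi : Mono i) (hB0 : ¬ IsZero B) (hF0 : ¬ IsZero F)
    (hBF : ¬ IsIso i)
    (hmax : ∀ (E : A) (f : E ⟶ F), Mono f → ¬ IsZero E →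
      d E * r B ≤ d B * r E ∧ (d E * r B = d B * r E → ∃ g : E ⟶ B, g ≫ i = f)) :
    ∀ (E' : A) (g : E' ⟶ cokernel i), Mono g → ¬ IsZero E' →
      d E' * r B < d B * r E' := by
  intro E' g hg hE'0
  haveI := hi
  haveI := hg
  have hrB : 0 < r B := hrpos B hB0
  -- the preimage K of E' in F
  set K : A := pullback g (cokernel.π i) with hKdef
  set snd : K ⟶ F := pullback.snd g (cokernel.π i) with hsnd
  set fst : K ⟶ E' := pullback.fst g (cokernel.π i) with hfst
  haveI hsndmono : Mono snd := by rw [hsnd]; infer_instance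
  haveI hfstepi : Epi fst := by rw [hfst]; infer_instance
  have hj0 : (0 : B ⟶ E') ≫ g = i ≫ cokernel.π i := by simp [cokernel.condition]
  set j : B ⟶ K := pullback.lift 0 i hj0 with hjdef
  have hjs : j ≫ snd = i := by rw [hjdef, hsnd]; exact pullback.lift_snd _ _ _
  have hjf : j ≫ fst = 0 := by rw [hjdef, hfst]; exact pullback.lift_fst _ _ _
  have hK0 : ¬ IsZero K := by
    intro hK
    have : j = 0 := hK.eq_of_tgt _ _
    have hi0 : i = 0 := by rw [← hjs, this, zero_comp]
    exact hB0 (IsZero.of_mono_eq_zero i hi0)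
  -- hmax applied to K
  obtain ⟨hineqK, heqK⟩ := hmax K snd hsndmono hK0
  have hlt : d K * r B < d B * r K := by
    rcases lt_or_eq_of_le hineqK with h | h
    · exact h
    · exfalso
      obtain ⟨h', hh'⟩ := heqK h
      have hjh : j ≫ h' = 𝟙 B := by
        rw [← cancel_mono i]
        rw [Category.assoc, hh', hjs, Category.id_comp]
      haveI : Mono (h' ≫ i) := by rw [hh']; infer_instance
      haveI : Mono h' := mono_of_mono h' i
      haveI : IsSplitEpi h' := ⟨⟨⟨j, hjh⟩⟩⟩
      haveI : IsIso h' := isIso_of_mono_of_isSplitEpi h'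
      have hjinv : j = inv h' := by
        rw [← cancel_mono h', hjh, IsIso.inv_hom_id]
      haveI : IsIso j := by rw [hjinv]; infer_instance
      have hfst0 : fst = 0 := by
        rw [← cancel_epi j, hjf, comp_zero]
      exact hE'0 (IsZero.of_epi_eq_zero fst hfst0)
  -- the canonical iso cokernel snd ≅ cokernel g
  have hsndc : snd ≫ cokernel.π i ≫ cokernel.π g = 0 := by
    rw [← Category.assoc, ← pullback.condition, Category.assoc, cokernel.condition, comp_zero]
  set v : cokernel snd ⟶ cokernel g := cokernel.desc snd (cokernel.π i ≫ cokernel.π g) hsndc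
    with hvdef
  have hw0 : i ≫ cokernel.π snd = 0 := by
    rw [← hjs, Category.assoc, cokernel.condition, comp_zero]
  set w : cokernel i ⟶ cokernel snd := cokernel.desc i (cokernel.π snd) hw0 with hwdef
  have hgw : g ≫ w = 0 := by
    rw [← cancel_epi fst]
    rw [← Category.assoc, pullback.condition, comp_zero]
    rw [Category.assoc, hwdef, cokernel.π_desc, hsnd, cokernel.condition]
  set u : cokernel g ⟶ cokernel snd := cokernel.desc g w hgw with hudef
  have hvu : v ≫ u = 𝟙 (cokernel snd) := by
    rw [← cancel_epi (cokernel.π snd)]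
    rw [← Category.assoc, hvdef, cokernel.π_desc, Category.assoc, hudef, cokernel.π_desc,
      hwdef, cokernel.π_desc, Category.comp_id]
  have hwv : w ≫ v = cokernel.π g := by
    rw [← cancel_epi (cokernel.π i)]
    rw [← Category.assoc, hwdef, cokernel.π_desc, hvdef, cokernel.π_desc]
  have huv : u ≫ v = 𝟙 (cokernel g) := by
    rw [← cancel_epi (cokernel.π g)]
    rw [← Category.assoc, hudef, cokernel.π_desc, hwv, Category.comp_id]
  haveI : IsIso v := ⟨u, hvu, huv⟩
  haveI : Mono v := inferInstance
  haveI : Epi v := inferInstance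
  -- r is invariant along v
  have hrCs : r (cokernel snd) = r (cokernel g) :=
    r_eq_of_iso' r hr hrpos hB0 (asIso v)
  -- d (cokernel v) ≥ 0 via hmax on a copy of B
  set Z : A := cokernel v with hZdef
  have hZzero : IsZero Z := isZero_cokernel_of_epi' v
  have hmono0 : Mono (0 : Z ⟶ B) := mono_of_isZero_src' hZzero _
  have e5d := hd (0 : Z ⟶ B) hmono0
  set B₂ : A := cokernel (0 : Z ⟶ B) with hB₂def
  have eiso : B₂ ≅ B := cokernelZeroIsoTarget
  have hB₂0 : ¬ IsZero B₂ := fun h => hB0 (h.of_iso eiso.symm)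
  haveI : Mono eiso.hom := inferInstance
  haveI : Mono (eiso.hom ≫ i) := mono_comp _ _
  obtain ⟨hineqB₂, -⟩ := hmax B₂ (eiso.hom ≫ i) inferInstance hB₂0
  have hrB₂ : r B₂ = r B := r_eq_of_iso' r hr hrpos hB0 eiso
  have hdB₂ : d B₂ ≤ d B := by
    rw [hrB₂] at hineqB₂
    exact le_of_mul_le_mul_right hineqB₂ hrB
  have hdZ : 0 ≤ d Z := by linarith
  -- additivity equations
  have e1d := hd i hi
  have e1r := hr i hi
  have e2d := hd g hg
  have e2r := hr g hg
  have e3d := hd snd hsndmono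
  have e3r := hr snd hsndmono
  have e4d := hd v inferInstance
  -- assemble
  have h10 : d E' = d F - d B - d (cokernel g) := by linarith
  have h11 : r E' = r F - r B - r (cokernel g) := by linarith
  have h12 : r K = r F - r (cokernel g) := by linarith
  have h13 : d F - d (cokernel g) ≤ d K := by linarith
  have h14 : (d F - d (cokernel g)) * r B ≤ d K * r B :=
    mul_le_mul_of_nonneg_right h13 hrB.le
  have h15 : (d F - d (cokernel g)) * r B < d B * (r F - r (cokernel g)) := by
    rw [← h12]
    exact lt_of_le_of_lt h14 hlt
  rw [h10, h11]
  nlinarith [h15]
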